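/- arXiv:0812.0633 — 6 statements merged into one kernel-verified Lean document; each statement's English description precedes it below -/
import Mathlib

section
/- For every β > 1 there exists a unique ζ > 0 such that tanh(β·ζ) = ζ. -/
/-!
The map `g x = tanh x / x` is the slope of the secant of `tanh` through `0`; as `tanh` is strictly
concave on `[0, ∞)`, `g` is strictly decreasing on `(0, ∞)`. It tends to `tanh' 0 = 1` at `0⁺` and
`g (1 / c) < c`, so it takes every value `c ∈ (0, 1)` exactly once. Finally `ζ > 0` solves
`tanh (β ζ) = ζ` iff `g (β ζ) = 1 / β`.
-/

open Set Filter Topology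

theorem StrictConcaveOn.strictAntiOn_div_self {𝕜 : Type*} [Field 𝕜] [LinearOrder 𝕜]
    [IsStrictOrderedRing 𝕜] {f : 𝕜 → 𝕜} (hf : StrictConcaveOn 𝕜 (Ici 0) f) (h0 : f 0 = 0) :
    StrictAntiOn (fun x => f x / x) (Ioi 0) := by
  intro x hx y hy hxy
  simpa [h0] using
    hf.secant_strict_mono self_mem_Ici (le_of_lt hx) (le_of_lt hy) hx.ne' hy.ne' hxy

namespace Real

theorem hasDerivAt_tanh (x : ℝ) : HasDerivAt tanh (cosh x ^ 2)⁻¹ x := by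
  have h := (hasDerivAt_sinh x).div (hasDerivAt_cosh x) (cosh_pos x).ne'
  rw [show cosh x * cosh x - sinh x * sinh x = 1 by linear_combination cosh_sq_sub_sinh_sq x,
    one_div] at h
  rwa [← show tanh = sinh / cosh from funext tanh_eq_sinh_div_cosh] at h

theorem continuous_tanh : Continuous tanh :=
  continuous_iff_continuousAt.2 fun x => (hasDerivAt_tanh x).continuousAt

theorem strictConcaveOn_tanh : StrictConcaveOn ℝ (Ici 0) tanh := by
  refine StrictAntiOn.strictConcaveOn_of_deriv (convex_Ici 0) continuous_tanh.continuousOn ?_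
  rw [interior_Ici, funext fun x => (hasDerivAt_tanh x).deriv]
  intro x hx y hy hxy
  have hcosh := cosh_strictMonoOn (mem_Ici.2 hx.le) (mem_Ici.2 hy.le) hxy
  change (cosh y ^ 2)⁻¹ < (cosh x ^ 2)⁻¹
  gcongr

theorem tendsto_tanh_div_self_nhdsGT_zero : Tendsto (fun x => tanh x / x) (𝓝[>] 0) (𝓝 1) := by
  have h := hasDerivAt_iff_tendsto_slope.1 (hasDerivAt_tanh 0)
  rw [cosh_zero, one_pow, inv_one] at h
  refine (h.mono_left (nhdsWithin_mono _ fun x hx => ne_of_gt hx)).congr fun x => ?_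
  rw [slope_def_field, tanh_zero, sub_zero, sub_zero]

theorem exists_tanh_div_self_eq {c : ℝ} (hc0 : 0 < c) (hc1 : c < 1) :
    ∃ x, 0 < x ∧ tanh x / x = c := by
  obtain ⟨y, hcy, hy0, hyc⟩ : ∃ y, c < tanh y / y ∧ 0 < y ∧ y < c⁻¹ :=
    ((tendsto_tanh_div_self_nhdsGT_zero.eventually (eventually_gt_nhds hc1)).and
      (Ioo_mem_nhdsGT (inv_pos.2 hc0))).exists
  have hlt : tanh c⁻¹ / c⁻¹ < c := by
    rw [div_inv_eq_mul]
    nlinarith [tanh_lt_one c⁻¹]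
  have hcont : ContinuousOn (fun x => tanh x / x) (Icc y c⁻¹) :=
    continuous_tanh.continuousOn.div continuousOn_id fun x hx => (hy0.trans_le hx.1).ne'
  obtain ⟨x, hx, hxc⟩ := intermediate_value_Ioo' hyc.le hcont ⟨hlt, hcy⟩
  exact ⟨x, hy0.trans hx.1, hxc⟩

end Real

/-- For every β > 1 there exists a unique ζ > 0 such that tanh(β·ζ) = ζ. -/
theorem stmt0 (β : ℝ) (hβ : 1 < β) :
    ∃! ζ : ℝ, 0 < ζ ∧ Real.tanh (β * ζ) = ζ := by
  have hβ0 : 0 < β := one_pos.trans hβ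
  have fixed_iff : ∀ ζ, 0 < ζ → (Real.tanh (β * ζ) = ζ ↔ Real.tanh (β * ζ) / (β * ζ) = β⁻¹) := by
    intro ζ hζ
    rw [div_eq_iff (by positivity), inv_mul_cancel_left₀ hβ0.ne']
  obtain ⟨x, hx0, hx⟩ := Real.exists_tanh_div_self_eq (inv_pos.2 hβ0) (inv_lt_one_of_one_lt₀ hβ)
  have hβx : β * (x / β) = x := mul_div_cancel₀ x hβ0.ne'
  refine ⟨x / β, ⟨by positivity, (fixed_iff _ (by positivity)).2 (by rwa [hβx])⟩, ?_⟩
  rintro ζ ⟨hζ, hfix⟩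
  have hβζ : β * ζ = x := (Real.strictConcaveOn_tanh.strictAntiOn_div_self Real.tanh_zero).injOn
    (mul_pos hβ0 hζ) hx0 (((fixed_iff ζ hζ).1 hfix).trans hx.symm)
  rw [← hβζ, mul_div_cancel_left₀ ζ hβ0.ne']
end

section
/- If β = 1 + δ with 0 < δ and δ → 0, then the unique positive root ζ of tanh(β·x) = x satisfies ζ = √(3δ) + O(δ^{3/2}); more precisely, there exist constants C > 0 and δ₀ > 0 such that for all 0 < δ < δ₀, |ζ(δ) − √(3δ)| ≤ C·δ^{3/2}. -/
/-!
With `u = (1 + δ) ζ` the equation reads `tanh u = u / (1 + δ)`. The Taylor bounds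
`u - u³/3 ≤ tanh u ≤ u - u³/3 + 2u⁵/15` on `u ≥ 0`, each obtained by integrating a derivative
inequality from `0`, turn this into `(1 + δ)³ ζ² = 3δ + O(ζ⁴)`. Since `ζ = tanh u < 1`, a first
pass gives `ζ² = O(δ)`, and a second `|ζ² - 3δ| = O(δ²)`. Dividing by `ζ + √(3δ) ≥ √(3δ)`
gives `|ζ - √(3δ)| = O(δ^{3/2})`.
-/

open Real Set

lemma Real.hasDerivAt_tanh_s2 (x : ℝ) : HasDerivAt tanh (1 - tanh x ^ 2) x := by
  rw [show tanh = fun y => sinh y / cosh y from funext tanh_eq_sinh_div_cosh]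
  refine ((hasDerivAt_sinh x).div (hasDerivAt_cosh x) (cosh_pos x).ne').congr_deriv ?_
  field_simp

lemma Real.tanh_nonneg {x : ℝ} (hx : 0 ≤ x) : 0 ≤ tanh x := by
  rw [tanh_eq_sinh_div_cosh]
  exact div_nonneg (sinh_nonneg_iff.mpr hx) (cosh_pos x).le

lemma le_of_hasDerivAt_nonneg {f f' : ℝ → ℝ} {a b : ℝ} (hab : a ≤ b)
    (hf : ∀ y, HasDerivAt f (f' y) y) (hf' : ∀ y ∈ Ioo a b, 0 ≤ f' y) : f a ≤ f b := by
  refine monotoneOn_of_hasDerivWithinAt_nonneg (convex_Icc a b)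
    (fun y _ => (hf y).continuousAt.continuousWithinAt)
    (fun y _ => (hf y).hasDerivWithinAt) ?_ (left_mem_Icc.mpr hab) (right_mem_Icc.mpr hab) hab
  rw [interior_Icc]
  exact hf'

lemma Real.tanh_le_self {x : ℝ} (hx : 0 ≤ x) : tanh x ≤ x := by
  have := le_of_hasDerivAt_nonneg hx (f := fun z => z - tanh z) (f' := fun y => tanh y ^ 2)
    (fun y => ((hasDerivAt_id y).sub (hasDerivAt_tanh_s2 y)).congr_deriv (by ring))
    (fun y _ => sq_nonneg (tanh y))
  simpa using this

lemma Real.sub_pow_three_div_three_le_tanh {x : ℝ} (hx : 0 ≤ x) : x - x ^ 3 / 3 ≤ tanh x := by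
  have := le_of_hasDerivAt_nonneg hx (f := fun z => tanh z - (z - z ^ 3 / 3))
    (f' := fun y => y ^ 2 - tanh y ^ 2)
    (fun y => ((hasDerivAt_tanh_s2 y).sub ((hasDerivAt_id y).sub
      ((hasDerivAt_pow 3 y).div_const 3))).congr_deriv (by simp))
    (fun y hy => by
      have hle := tanh_le_self hy.1.le
      have hnonneg := tanh_nonneg hy.1.le
      show 0 ≤ y ^ 2 - tanh y ^ 2
      nlinarith)
  simpa using this

lemma Real.tanh_le_sub_pow_three_div_three_add_pow_five {x : ℝ} (hx : 0 ≤ x) (hx3 : x ^ 2 ≤ 3) :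
    tanh x ≤ x - x ^ 3 / 3 + 2 * x ^ 5 / 15 := by
  have := le_of_hasDerivAt_nonneg hx (f := fun z => z - z ^ 3 / 3 + 2 * z ^ 5 / 15 - tanh z)
    (f' := fun y => tanh y ^ 2 - y ^ 2 + 2 * y ^ 4 / 3)
    (fun y => (((hasDerivAt_id y).sub ((hasDerivAt_pow 3 y).div_const 3)).add
      (((hasDerivAt_pow 5 y).const_mul 2).div_const 15)).sub (hasDerivAt_tanh_s2 y)
      |>.congr_deriv (by simp; ring))
    (fun y hy => by
      have hcubic := sub_pow_three_div_three_le_tanh hy.1.le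
      have hy3 : y ^ 2 ≤ 3 := by nlinarith [hy.1, hy.2]
      have hpos : 0 ≤ y - y ^ 3 / 3 := by nlinarith [hy.1]
      show 0 ≤ tanh y ^ 2 - y ^ 2 + 2 * y ^ 4 / 3
      nlinarith [mul_le_mul hcubic hcubic hpos (tanh_nonneg hy.1.le), sq_nonneg (y ^ 3)])
  simpa using this

lemma three_mul_sub_one_le_of_tanh_mul_eq {β ζ : ℝ} (hβ : 0 ≤ β) (hζ : 0 < ζ)
    (h : tanh (β * ζ) = ζ) : 3 * (β - 1) ≤ β ^ 3 * ζ ^ 2 := by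
  have := h ▸ sub_pow_three_div_three_le_tanh (mul_nonneg hβ hζ.le)
  nlinarith

lemma le_three_mul_sub_one_add_of_tanh_mul_eq {β ζ : ℝ} (hβ : 0 ≤ β) (hζ : 0 < ζ)
    (hβζ : (β * ζ) ^ 2 ≤ 3) (h : tanh (β * ζ) = ζ) :
    β ^ 3 * ζ ^ 2 ≤ 3 * (β - 1) + 2 * β ^ 5 * ζ ^ 4 / 5 := by
  have := h ▸ tanh_le_sub_pow_three_div_three_add_pow_five (mul_nonneg hβ hζ.le) hβζ
  nlinarith

lemma abs_sq_sub_three_mul_le_of_tanh_one_add_mul_eq {δ ζ : ℝ} (hδ : 0 < δ) (hδ₀ : δ ≤ 1 / 10)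
    (hζ : 0 < ζ) (h : tanh ((1 + δ) * ζ) = ζ) : |ζ ^ 2 - 3 * δ| ≤ 18 * δ ^ 2 := by
  have hζ1 : ζ < 1 := h ▸ tanh_lt_one _
  have hβ : (1 : ℝ) ≤ 1 + δ := by linarith
  have hβ2 : (1 + δ) ^ 2 ≤ 121 / 100 := by nlinarith
  have hζ2 : ζ ^ 2 ≤ 1 := by nlinarith
  have hlow := three_mul_sub_one_le_of_tanh_mul_eq (by linarith) hζ h
  have hupp := le_three_mul_sub_one_add_of_tanh_mul_eq (by linarith) hζ
    (by rw [mul_pow]; nlinarith) h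
  rw [add_sub_cancel_left] at hlow hupp
  set v := (1 + δ) ^ 3 * ζ ^ 2
  have hζv : ζ ^ 2 ≤ v := le_mul_of_one_le_left (sq_nonneg ζ) (one_le_pow₀ hβ)
  have hupp' : v ≤ 3 * δ + 2 * (1 + δ) ^ 2 * ζ ^ 2 / 5 * v := by
    convert hupp using 1; ring
  have hw : 2 * (1 + δ) ^ 2 * ζ ^ 2 / 5 ≤ 121 / 250 := by
    nlinarith [mul_le_mul hβ2 hζ2 (sq_nonneg ζ) (by norm_num)]
  -- the quintic bound first yields `v ≤ 6δ`; fed back in, its error term becomes `O(δ²)`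
  have hv6 : v ≤ 6 * δ := by nlinarith [mul_le_mul_of_nonneg_right hw (hζv.trans' (sq_nonneg ζ))]
  rw [abs_le]
  constructor
  · have : (1 + δ) ^ 3 * (1 - 3 * δ) ≤ 1 := by
      nlinarith [show 1 - (1 + δ) ^ 3 * (1 - 3 * δ) = δ ^ 2 * (6 + 8 * δ + 3 * δ ^ 2) by ring,
        show 0 ≤ δ ^ 2 * (6 + 8 * δ + 3 * δ ^ 2) by positivity]
    nlinarith
  · nlinarith

lemma abs_sub_le_abs_sq_sub_div {a b : ℝ} (ha : 0 ≤ a) (hb : 0 < b) :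
    |a - b| ≤ |a ^ 2 - b ^ 2| / b := by
  rw [le_div_iff₀ hb, show a ^ 2 - b ^ 2 = (a - b) * (a + b) by ring, abs_mul,
    abs_of_pos (by linarith : 0 < a + b)]
  gcongr
  linarith

lemma Real.sq_div_sqrt_three_mul_le_rpow {δ : ℝ} (hδ : 0 < δ) :
    δ ^ 2 / √(3 * δ) ≤ δ ^ ((3 : ℝ) / 2) := by
  have hs : 0 < √δ := sqrt_pos.mpr hδ
  calc δ ^ 2 / √(3 * δ) ≤ δ ^ 2 / √δ := by gcongr; linarith
    _ = √δ ^ (3 : ℝ) := by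
      rw [rpow_ofNat, div_eq_iff hs.ne']
      nth_rw 1 [← sq_sqrt hδ.le]
      ring
    _ = δ ^ ((3 : ℝ) / 2) := (rpow_div_two_eq_sqrt 3 hδ.le).symm

/-- If β = 1 + δ with δ > 0 small, the unique positive root ζ(δ) of
    tanh((1+δ)·x) = x satisfies |ζ(δ) − √(3δ)| ≤ C·δ^{3/2} for some constants
    C > 0 and δ₀ > 0 and all 0 < δ < δ₀. -/
theorem stmt2 :
    ∃ C : ℝ, 0 < C ∧ ∃ δ₀ : ℝ, 0 < δ₀ ∧
      ∀ δ : ℝ, 0 < δ → δ < δ₀ →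
        ∀ ζ : ℝ, 0 < ζ → Real.tanh ((1 + δ) * ζ) = ζ →
          |ζ - Real.sqrt (3 * δ)| ≤ C * δ ^ ((3 : ℝ) / 2) := by
  refine ⟨18, by norm_num, 1 / 10, by norm_num, fun δ hδ hδ₀ ζ hζ h => ?_⟩
  have h3δ : 0 < 3 * δ := by positivity
  calc |ζ - √(3 * δ)| ≤ |ζ ^ 2 - √(3 * δ) ^ 2| / √(3 * δ) :=
        abs_sub_le_abs_sq_sub_div hζ.le (sqrt_pos.mpr h3δ)
    _ ≤ 18 * δ ^ 2 / √(3 * δ) := by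
        rw [sq_sqrt h3δ.le]
        gcongr
        exact abs_sq_sub_three_mul_le_of_tanh_one_add_mul_eq hδ hδ₀.le hζ h
    _ ≤ 18 * δ ^ ((3 : ℝ) / 2) := by
        rw [mul_div_assoc]
        gcongr
        exact sq_div_sqrt_three_mul_le_rpow hδ
end

section
/- Let (W_t) be a nonnegative supermartingale with W₀ = k, increments bounded above by B (W_{t+1} − W_t ≤ B almost surely), and let τ be a stopping time such that Var(W_{t+1} | F_t) > σ² > 0 on the event {τ > t}. Then for any u > 4B²/(3σ²), P(τ > u) ≤ 4k/(σ·√u). -/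
/-!
Put `M = σ √u` and `C = M + B`; the hypothesis on `u` says `B < M`, and for `k ≥ M` the bound
exceeds `1`, so let `k < M`. Stop at `ρ = min τ T`, where `T` is the first time before
`n = ⌈u⌉` at which `W ≥ M` (and `T = n` if there is none). Before `ρ` we have
`μ[W (t+1) | ℱ t] ≤ W t < M ≤ C`, so the variance bound gives
`μ[(C - W (t+1))² | ℱ t] ≥ (C - W t)² + σ²`: the process `(C - W t)² - σ² t` is a submartingale
up to `ρ`, and optional stopping yields `(C - k)² ≤ 𝔼[(C - W ρ)² - σ² ρ]`.
Since increments are at most `B`, `0 ≤ W ρ ≤ C`. On `{τ > u}`, either `W ρ ≥ M`, so that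
`(C - W ρ)² ≤ B² ≤ C² - M²`, or `ρ = n` and `σ² ρ ≥ M²`; in both cases
`C² - (C - W ρ)² + σ² ρ ≥ M²`. Markov's inequality then gives
`M² ℙ(τ > u) ≤ C² - (C - k)² ≤ 2 C k ≤ 4 M k`.
-/

open MeasureTheory ProbabilityTheory

lemma le_add_of_forall_lt_of_sub_le {w : ℕ → ℝ} {M B : ℝ} (hB : 0 ≤ B)
    (hinc : ∀ t, w (t + 1) - w t ≤ B) {r : ℕ} (h0 : w 0 < M) (hlt : ∀ t < r, w t < M) :
    w r ≤ M + B := by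
  cases r with
  | zero => linarith
  | succ r => linarith [hinc r, hlt r r.lt_succ_self]

lemma sq_le_sq_sub_sq_sub_sub {M B w x : ℝ} (hM : 0 ≤ M) (hB : 0 ≤ B) (hw₀ : 0 ≤ w)
    (hw : w ≤ M + B) (hx : 0 ≤ x) (h : M ≤ w ∨ M ^ 2 ≤ x) :
    M ^ 2 ≤ (M + B) ^ 2 - ((M + B - w) ^ 2 - x) := by
  rcases h with h | h <;> nlinarith

namespace MeasureTheory

variable {Ω : Type*} {m₀ : MeasurableSpace Ω} {μ : Measure Ω}

lemma condExp_sq_sub_ae_eq_condVar_add [IsFiniteMeasure μ] {m : MeasurableSpace Ω} (hm : m ≤ m₀)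
    {X : Ω → ℝ} (hX : MemLp X 2 μ) (c : ℝ) :
    μ[fun ω ↦ (c - X ω) ^ 2 | m] =ᵐ[μ] fun ω ↦ Var[X; μ | m] ω + (c - μ[X | m] ω) ^ 2 := by
  have hsplit : (fun ω ↦ (c - X ω) ^ 2) = (fun _ ↦ c ^ 2) - (2 * c) • X + X ^ 2 := by
    ext ω
    simp only [Pi.add_apply, Pi.sub_apply, Pi.smul_apply, Pi.pow_apply, smul_eq_mul]
    ring
  have hXint : Integrable X μ := hX.integrable one_le_two
  rw [hsplit]
  filter_upwards [condExp_add (g := X ^ 2) ((integrable_const (c ^ 2)).sub (hXint.smul (2 * c)))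
      hX.integrable_sq m, condExp_sub (integrable_const (c ^ 2)) (hXint.smul (2 * c)) m,
    condExp_smul (2 * c) X m, condVar_ae_eq_condExp_sq_sub_sq_condExp hm hX] with ω h₁ h₂ h₃ h₄
  simp only [Pi.add_apply, Pi.sub_apply, Pi.smul_apply, Pi.pow_apply, smul_eq_mul] at h₁ h₂ h₃ h₄ ⊢
  rw [h₁, h₂, h₃, h₄, condExp_const hm]
  ring

lemma sq_sub_add_le_condExp_sq_sub [IsFiniteMeasure μ] {m : MeasurableSpace Ω} (hm : m ≤ m₀)
    {X Y : Ω → ℝ} (hX : MemLp X 2 μ) (hXY : μ[X | m] ≤ᵐ[μ] Y) (c v : ℝ) :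
    ∀ᵐ ω ∂μ, Y ω ≤ c → v < Var[X; μ | m] ω →
      (c - Y ω) ^ 2 + v ≤ μ[fun ω ↦ (c - X ω) ^ 2 | m] ω := by
  filter_upwards [condExp_sq_sub_ae_eq_condVar_add hm hX c, hXY] with ω hdecomp hω hYc hv
  rw [hdecomp]
  nlinarith

lemma memLp_of_nonneg_of_sub_le [IsFiniteMeasure μ] {W : ℕ → Ω → ℝ} {k B : ℝ}
    (hW : ∀ t, AEStronglyMeasurable (W t) μ) (hnn : ∀ t, ∀ᵐ ω ∂μ, 0 ≤ W t ω)
    (h0 : ∀ᵐ ω ∂μ, W 0 ω = k) (hinc : ∀ t, ∀ᵐ ω ∂μ, W (t + 1) ω - W t ω ≤ B)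
    (p : ENNReal) (t : ℕ) : MemLp (W t) p μ := by
  refine memLp_of_bounded (a := 0) (b := k + t * B) ?_ (hW t) p
  filter_upwards [hnn t, h0, ae_all_iff.2 hinc] with ω hω hω0 hωinc
  refine ⟨hω, ?_⟩
  clear hω
  induction t with
  | zero => simp [hω0]
  | succ t ih => push_cast; linarith [hωinc t]

lemma mul_measureReal_le_integral_of_ae_le [IsFiniteMeasure μ] {g : Ω → ℝ} {s : Set Ω} {a : ℝ}
    (ha : 0 ≤ a) (hg : 0 ≤ᵐ[μ] g) (hgi : Integrable g μ) (hs : ∀ᵐ ω ∂μ, ω ∈ s → a ≤ g ω) :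
    a * μ.real s ≤ ∫ ω, g ω ∂μ :=
  calc a * μ.real s ≤ a * μ.real {ω | a ≤ g ω} :=
        mul_le_mul_of_nonneg_left (ENNReal.toReal_mono (measure_ne_top _ _) (measure_mono_ae hs)) ha
    _ ≤ ∫ ω, g ω ∂μ := mul_meas_ge_le_integral_of_nonneg hg hgi a

lemma min_hittingBtwn_eq_or_mem {β : Type*} {u : ℕ → Ω → β} {s : Set β} {n τ : ℕ} (hn : n ≤ τ)
    (ω : Ω) : min τ (hittingBtwn u s 0 n ω) = n ∨ u (min τ (hittingBtwn u s 0 n ω)) ω ∈ s := by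
  rcases (hittingBtwn_le (u := u) (s := s) (n := 0) ω).eq_or_lt with h | h
  · left
    rw [h]
    exact min_eq_right hn
  · right
    rw [min_eq_right (h.le.trans hn)]
    exact hittingBtwn_mem_set_of_hittingBtwn_lt h

variable {𝒢 : Filtration ℕ m₀}

lemma integrable_comp_stoppingTime {f : ℕ → Ω → ℝ} (hf : ∀ i, Integrable (f i) μ) {π : Ω → ℕ}
    (hπ : IsStoppingTime 𝒢 (fun ω ↦ (π ω : WithTop ℕ))) {N : ℕ} (hbdd : ∀ ω, π ω ≤ N) :
    Integrable (fun ω ↦ f (π ω) ω) μ :=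
  integrable_stoppedValue ℕ hπ hf fun ω ↦ WithTop.coe_le_coe.2 (hbdd ω)

lemma integral_le_integral_comp_stoppingTime_of_le_condExp [IsFiniteMeasure μ]
    {f : ℕ → Ω → ℝ} (hf : ∀ i, Integrable (f i) μ) {π : Ω → ℕ}
    (hπ : IsStoppingTime 𝒢 (fun ω ↦ (π ω : WithTop ℕ))) {N : ℕ} (hbdd : ∀ ω, π ω ≤ N)
    (hstep : ∀ i, ∀ᵐ ω ∂μ, i < π ω → f i ω ≤ μ[f (i + 1) | 𝒢 i] ω) :
    ∫ ω, f 0 ω ∂μ ≤ ∫ ω, f (π ω) ω ∂μ := by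
  have hE (i : ℕ) : MeasurableSet[𝒢 i] {ω | i < π ω} := by
    simpa using hπ.measurableSet_gt i
  have hterm (i : ℕ) : 0 ≤ ∫ ω in {ω | i < π ω}, (f (i + 1) - f i) ω ∂μ := by
    rw [integral_sub' (hf _).integrableOn (hf _).integrableOn, sub_nonneg]
    calc ∫ ω in {ω | i < π ω}, f i ω ∂μ
        ≤ ∫ ω in {ω | i < π ω}, μ[f (i + 1) | 𝒢 i] ω ∂μ := by
          refine setIntegral_mono_ae_restrict (hf _).integrableOn
            integrable_condExp.integrableOn ?_
          rw [Filter.EventuallyLE, ae_restrict_iff' (𝒢.le i _ (hE i))]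
          filter_upwards [hstep i] with ω hω hωE using hω hωE
      _ = ∫ ω in {ω | i < π ω}, f (i + 1) ω ∂μ := setIntegral_condExp (𝒢.le i) (hf _) (hE i)
  have hsum := stoppedValue_sub_eq_sum' (u := f) (π := fun ω ↦ (π ω : ℕ∞)) (τ := fun _ ↦ 0)
    (fun _ ↦ zero_le) fun ω ↦ by exact_mod_cast hbdd ω
  rw [show stoppedValue f (fun ω ↦ (π ω : ℕ∞)) = fun ω ↦ f (π ω) ω from rfl,
    show stoppedValue f (fun _ ↦ (0 : ℕ∞)) = f 0 from rfl] at hsum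
  simp only [zero_le, true_and, Nat.cast_lt, Finset.sum_apply] at hsum
  rw [← sub_nonneg, ← integral_sub' (integrable_comp_stoppingTime hf hπ hbdd) (hf 0), hsum,
    integral_finsetSum _ fun i _ ↦ ((hf _).sub (hf _)).indicator (𝒢.le i _ (hE i))]
  refine Finset.sum_nonneg fun i _ ↦ ?_
  rw [integral_indicator (𝒢.le i _ (hE i))]
  exact hterm i

lemma Supermartingale.sq_sub_sub_mul_le_condExp [IsFiniteMeasure μ] {W : ℕ → Ω → ℝ}
    (hW : Supermartingale W 𝒢 μ) {t : ℕ} (hX : MemLp (W (t + 1)) 2 μ) (c v : ℝ) :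
    ∀ᵐ ω ∂μ, W t ω ≤ c → v < Var[W (t + 1); μ | 𝒢 t] ω →
      (c - W t ω) ^ 2 - v * t ≤ μ[fun ω ↦ (c - W (t + 1) ω) ^ 2 - v * (t + 1 : ℕ) | 𝒢 t] ω := by
  have hsplit : (fun ω ↦ (c - W (t + 1) ω) ^ 2 - v * (t + 1 : ℕ)) =
      (fun ω ↦ (c - W (t + 1) ω) ^ 2) - fun _ ↦ v * (t + 1 : ℕ) := rfl
  filter_upwards [sq_sub_add_le_condExp_sq_sub (𝒢.le t) hX (hW.condExp_ae_le t.le_succ) c v,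
    condExp_sub (f := fun ω ↦ (c - W (t + 1) ω) ^ 2) ((memLp_const c).sub hX).integrable_sq
      (integrable_const (v * (t + 1 : ℕ))) (𝒢 t)] with ω hω hsub hWc hv
  rw [hsplit, hsub, Pi.sub_apply, condExp_const (𝒢.le t)]
  push_cast
  linarith [hω hWc hv]

lemma Supermartingale.integral_sq_sub_le_integral_stopped [IsFiniteMeasure μ] {W : ℕ → Ω → ℝ}
    (hW : Supermartingale W 𝒢 μ) (hL2 : ∀ t, MemLp (W t) 2 μ) {ρ : Ω → ℕ}
    (hρ : IsStoppingTime 𝒢 (fun ω ↦ (ρ ω : WithTop ℕ))) {N : ℕ} (hρN : ∀ ω, ρ ω ≤ N) {c v : ℝ}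
    (hbelow : ∀ t, ∀ᵐ ω ∂μ, t < ρ ω → W t ω ≤ c)
    (hvar : ∀ t, ∀ᵐ ω ∂μ, t < ρ ω → v < Var[W (t + 1); μ | 𝒢 t] ω) :
    ∫ ω, (c - W 0 ω) ^ 2 ∂μ ≤ ∫ ω, (c - W (ρ ω) ω) ^ 2 - v * ρ ω ∂μ := by
  have h := integral_le_integral_comp_stoppingTime_of_le_condExp
    (f := fun t ω ↦ (c - W t ω) ^ 2 - v * t)
    (fun t ↦ ((memLp_const c).sub (hL2 t)).integrable_sq.sub (integrable_const _)) hρ hρN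
    fun t ↦ by
      filter_upwards [hW.sq_sub_sub_mul_le_condExp (hL2 (t + 1)) c v, hbelow t, hvar t]
        with ω hω hc hv ht using hω (hc ht) (hv ht)
  simpa using h

theorem Supermartingale.sq_mul_measureReal_le_of_condVar_gt [IsProbabilityMeasure μ] {W : ℕ → Ω → ℝ}
    {τ : Ω → ℕ} {k B σ M : ℝ} {n : ℕ} (hB : 0 ≤ B) (hW : Supermartingale W 𝒢 μ)
    (hnn : ∀ t, ∀ᵐ ω ∂μ, 0 ≤ W t ω) (h0 : ∀ᵐ ω ∂μ, W 0 ω = k)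
    (hinc : ∀ t, ∀ᵐ ω ∂μ, W (t + 1) ω - W t ω ≤ B)
    (hτ : IsStoppingTime 𝒢 (fun ω ↦ (τ ω : WithTop ℕ)))
    (hvar : ∀ t, ∀ᵐ ω ∂μ, t < τ ω → σ ^ 2 < Var[W (t + 1); μ | 𝒢 t] ω)
    (hkM : k < M) (hMn : M ^ 2 ≤ σ ^ 2 * n) :
    M ^ 2 * μ.real {ω | n ≤ τ ω} ≤ (M + B) ^ 2 - (M + B - k) ^ 2 := by
  set C := M + B
  set T : Ω → ℕ := hittingBtwn W (Set.Ici M) 0 n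
  set ρ : Ω → ℕ := fun ω ↦ min (τ ω) (T ω)
  have hρ : IsStoppingTime 𝒢 (fun ω ↦ (ρ ω : WithTop ℕ)) :=
    hτ.min (hW.stronglyAdapted.adapted.isStoppingTime_hittingBtwn measurableSet_Ici)
  have hρn (ω : Ω) : ρ ω ≤ n := (min_le_right _ _).trans (hittingBtwn_le ω)
  have hρlt (ω : Ω) (t : ℕ) (ht : t < ρ ω) : W t ω < M := by
    simpa using notMem_of_lt_hittingBtwn (ht.trans_le (min_le_right _ _)) (Nat.zero_le t)
  have hL2 := memLp_of_nonneg_of_sub_le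
    (fun t ↦ ((hW.stronglyMeasurable t).mono (𝒢.le t)).aestronglyMeasurable) hnn h0 hinc 2
  have hopt := hW.integral_sq_sub_le_integral_stopped hL2 hρ hρn (c := C) (v := σ ^ 2)
    (fun t ↦ ae_of_all _ fun ω ht ↦ by linarith [hρlt ω t ht])
    fun t ↦ (hvar t).mono fun ω hv ht ↦ hv (ht.trans_le (min_le_left _ _))
  rw [integral_congr_ae (g := fun _ ↦ (C - k) ^ 2) (h0.mono fun ω hω ↦ by simp [hω]),
    integral_const, probReal_univ, one_smul] at hopt
  set g : Ω → ℝ := fun ω ↦ C ^ 2 - ((C - W (ρ ω) ω) ^ 2 - σ ^ 2 * ρ ω)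
  have hg : ∀ᵐ ω ∂μ, 0 ≤ g ω ∧ (n ≤ τ ω → M ^ 2 ≤ g ω) := by
    filter_upwards [ae_all_iff.2 hnn, h0, ae_all_iff.2 hinc] with ω hω₀ hωk hωinc
    have hWC : W (ρ ω) ω ≤ C := le_add_of_forall_lt_of_sub_le hB hωinc (hωk ▸ hkM) (hρlt ω)
    have hσρ : 0 ≤ σ ^ 2 * (ρ ω : ℝ) := by positivity
    refine ⟨by nlinarith [hω₀ (ρ ω)], fun hnτ ↦ sq_le_sq_sub_sq_sub_sub (by linarith [hω₀ 0]) hB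
      (hω₀ _) hWC hσρ ?_⟩
    rcases min_hittingBtwn_eq_or_mem hnτ ω with hρeq | hρM
    · exact Or.inr (by rw [show ρ ω = n from hρeq]; exact hMn)
    · exact Or.inl hρM
  have hcomp := integrable_comp_stoppingTime (f := fun t ω ↦ (C - W t ω) ^ 2 - σ ^ 2 * t)
    (fun t ↦ ((memLp_const C).sub (hL2 t)).integrable_sq.sub (integrable_const (σ ^ 2 * t))) hρ hρn
  calc M ^ 2 * μ.real {ω | n ≤ τ ω}
      ≤ ∫ ω, g ω ∂μ := mul_measureReal_le_integral_of_ae_le (sq_nonneg M)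
        (hg.mono fun _ h ↦ h.1) ((integrable_const _).sub hcomp) (hg.mono fun _ h ↦ h.2)
    _ = C ^ 2 - ∫ ω, (C - W (ρ ω) ω) ^ 2 - σ ^ 2 * ρ ω ∂μ := by
        rw [integral_sub (integrable_const _) hcomp, integral_const, probReal_univ, one_smul]
    _ ≤ C ^ 2 - (C - k) ^ 2 := by linarith

end MeasureTheory

/-- A nonnegative supermartingale started at k, with increments bounded by B
    and conditional variance exceeding σ² before the stopping time τ,
    satisfies P(τ > u) ≤ 4k/(σ√u) for u > 4B²/(3σ²). -/
theorem stmt9 {Ω : Type*} {m0 : MeasurableSpace Ω} {μ : Measure Ω}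
    [IsProbabilityMeasure μ]
    (ℱ : Filtration ℕ m0) (W : ℕ → Ω → ℝ) (τ : Ω → ℕ)
    (k B σ u : ℝ) (hk : 0 ≤ k) (hB : 0 < B) (hσ : 0 < σ)
    (hsup : Supermartingale W ℱ μ)
    (hnn : ∀ t, ∀ᵐ ω ∂μ, 0 ≤ W t ω)
    (h0 : ∀ᵐ ω ∂μ, W 0 ω = k)
    (hinc : ∀ t, ∀ᵐ ω ∂μ, W (t + 1) ω - W t ω ≤ B)
    (hstop : IsStoppingTime ℱ (fun ω => (τ ω : WithTop ℕ)))
    (hvar : ∀ t, ∀ᵐ ω ∂μ, t < τ ω →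
      σ ^ 2 < (μ[fun ω' => (W (t + 1) ω' - (μ[W (t + 1)|ℱ t]) ω') ^ 2|ℱ t]) ω)
    (hu : 4 * B ^ 2 / (3 * σ ^ 2) < u) :
    (μ {ω | u < (τ ω : ℝ)}).toReal ≤ 4 * k / (σ * Real.sqrt u) := by
  have hu0 : 0 < u := lt_of_le_of_lt (by positivity) hu
  set M := σ * Real.sqrt u with hM_def
  have hM : 0 < M := by positivity
  have hM2 : M ^ 2 = σ ^ 2 * u := by rw [hM_def, mul_pow, Real.sq_sqrt hu0.le]
  have hBM : B < M := by
    rw [div_lt_iff₀ (by positivity)] at hu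
    nlinarith
  have hP : (μ {ω | u < (τ ω : ℝ)}).toReal ≤ μ.real {ω | ⌈u⌉₊ ≤ τ ω} :=
    measureReal_mono fun ω hω ↦ Nat.ceil_le.2 (le_of_lt hω)
  rw [le_div_iff₀ hM]
  rcases le_or_gt M k with hkM | hkM
  · nlinarith [measureReal_le_one (μ := μ) (s := {ω | ⌈u⌉₊ ≤ τ ω})]
  have hmain := hsup.sq_mul_measureReal_le_of_condVar_gt hB.le hnn h0 hinc hstop hvar hkM
    (by rw [hM2]; gcongr; exact Nat.le_ceil u)
  nlinarith
end

section
/- A birth-and-death chain on {0, 1, …, n} with transition kernel P admits a monotone coupling (a coupling of two copies started from ordered positions that preserves the coordinate order at every step) if and only if P(i, i+1) + P(i+1, i) ≤ 1 for every i < n. -/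
open Finset

/-!
A monotone coupling may not charge the pair `(i + 1, i)`, so the mass that the lower copy puts
on `i + 1` and the mass that the upper copy puts on `i` sit on disjoint sets of pairs; together
they are at most the total mass, which is the necessity of `P(i, i+1) + P(i+1, i) ≤ 1`.

Conversely, from `x` and `y ≥ x + 2` the supports `[x-1, x+1]` and `[y-1, y+1]` are already
ordered, so the product coupling is monotone. From `x` and `x + 1`, the up-move mass
`p = P(x, x+1)` of the lower copy is sent to a `p`-sized proportional slice of the upper copy's mass
above `x`, which has size `1 - P(x+1, x) ≥ p`; what remains of the two laws lives on `[0, x]` and on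
`[x, n]` respectively, so their product coupling is monotone again.
-/

def IsMonotoneCoupling (n : ℕ) (μ ν : ℕ → ℝ) (q : ℕ → ℕ → ℝ) : Prop :=
  (∀ a b, 0 ≤ q a b) ∧
    (∀ a, a ≤ n → ∑ b ∈ range (n + 1), q a b = μ a) ∧
    (∀ b, b ≤ n → ∑ a ∈ range (n + 1), q a b = ν b) ∧
    (∀ a b, b < a → q a b = 0)

namespace IsMonotoneCoupling

variable {n : ℕ} {μ ν μ₁ ν₁ μ₂ ν₂ : ℕ → ℝ} {q q₁ q₂ : ℕ → ℕ → ℝ}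

theorem add (h₁ : IsMonotoneCoupling n μ₁ ν₁ q₁) (h₂ : IsMonotoneCoupling n μ₂ ν₂ q₂) :
    IsMonotoneCoupling n (μ₁ + μ₂) (ν₁ + ν₂) (q₁ + q₂) := by
  obtain ⟨hq₁, hr₁, hc₁, hm₁⟩ := h₁
  obtain ⟨hq₂, hr₂, hc₂, hm₂⟩ := h₂
  refine ⟨fun a b => add_nonneg (hq₁ a b) (hq₂ a b), fun a ha => ?_, fun b hb => ?_,
    fun a b hba => ?_⟩
  · simp only [Pi.add_apply, sum_add_distrib, hr₁ a ha, hr₂ a ha]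
  · simp only [Pi.add_apply, sum_add_distrib, hc₁ b hb, hc₂ b hb]
  · simp only [Pi.add_apply, hm₁ a b hba, hm₂ a b hba, add_zero]

theorem apply_succ_add_apply_le_sum (h : IsMonotoneCoupling n μ ν q) {i : ℕ} (hi : i + 1 ≤ n) :
    μ (i + 1) + ν i ≤ ∑ a ∈ range (n + 1), μ a := by
  obtain ⟨hq, hrow, hcol, hmono⟩ := h
  have hi₁ : i + 1 ∈ range (n + 1) := mem_range.mpr (by omega)
  have hi₀ : i ∈ range (n + 1) := mem_range.mpr (by omega)
  have htotal : ∑ a ∈ range (n + 1), μ a = ∑ a ∈ range (n + 1), ∑ b ∈ range (n + 1), q a b :=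
    sum_congr rfl fun a ha => (hrow a (by have := mem_range.mp ha; omega)).symm
  have hcol_i : ν i = ∑ a ∈ (range (n + 1)).erase (i + 1), q a i := by
    rw [← hcol i (by omega), ← add_sum_erase _ _ hi₁, hmono (i + 1) i (by omega), zero_add]
  have hcol_le : ∑ a ∈ (range (n + 1)).erase (i + 1), q a i
      ≤ ∑ a ∈ (range (n + 1)).erase (i + 1), ∑ b ∈ range (n + 1), q a b :=
    sum_le_sum fun a _ => single_le_sum (fun b _ => hq a b) hi₀
  rw [htotal, ← add_sum_erase _ _ hi₁, hrow (i + 1) hi, hcol_i]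
  gcongr

end IsMonotoneCoupling

section

variable {n : ℕ} {μ ν : ℕ → ℝ}

theorem isMonotoneCoupling_diag (hμ : ∀ a ≤ n, 0 ≤ μ a) :
    IsMonotoneCoupling n μ μ (fun a b => if a = b ∧ b ≤ n then μ a else 0) := by
  refine ⟨fun a b => ?_, fun a ha => ?_, fun b hb => ?_, fun a b hba => ?_⟩
  · dsimp only
    split_ifs with h
    exacts [hμ a (h.1 ▸ h.2), le_rfl]
  · rw [sum_eq_single_of_mem a (mem_range.mpr (by omega)) fun b _ hb => if_neg (by tauto),
      if_pos ⟨rfl, ha⟩]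
  · rw [sum_eq_single_of_mem b (mem_range.mpr (by omega)) fun a _ ha => if_neg (by tauto),
      if_pos ⟨rfl, hb⟩]
  · exact if_neg (by omega)

theorem isMonotoneCoupling_prod (hμ : ∀ a ≤ n, 0 ≤ μ a) (hν : ∀ b ≤ n, 0 ≤ ν b)
    (hmass : ∑ a ∈ range (n + 1), μ a = ∑ b ∈ range (n + 1), ν b)
    (hsep : ∀ a b, a ≤ n → b < a → μ a = 0 ∨ ν b = 0) :
    IsMonotoneCoupling n μ ν (fun a b =>
      if a ≤ b ∧ b ≤ n then μ a * ν b / ∑ c ∈ range (n + 1), ν c else 0) := by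
  set m := ∑ c ∈ range (n + 1), ν c
  have hm : 0 ≤ m := sum_nonneg fun b hb => hν b (by have := mem_range.mp hb; omega)
  have hmul_div : ∀ {w : ℕ → ℝ} {k : ℕ}, (∀ c ≤ n, 0 ≤ w c) → ∑ c ∈ range (n + 1), w c = m →
      k ≤ n → m * w k / m = w k := by
    intro w k hw hwm hk
    rcases hm.eq_or_lt with hm0 | hm0
    · have hzero := (sum_eq_zero_iff_of_nonneg fun c hc =>
        hw c (by have := mem_range.mp hc; omega)).mp (hwm.trans hm0.symm)
      rw [hzero k (mem_range.mpr (by omega)), mul_zero, zero_div]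
    · exact mul_div_cancel_left₀ _ hm0.ne'
  refine ⟨fun a b => ?_, fun a ha => ?_, fun b hb => ?_, fun a b hba => if_neg (by omega)⟩
  · dsimp only
    split_ifs with h
    exacts [div_nonneg (mul_nonneg (hμ a (by omega)) (hν b h.2)) hm, le_rfl]
  · calc ∑ b ∈ range (n + 1), (if a ≤ b ∧ b ≤ n then μ a * ν b / m else 0)
        = ∑ b ∈ range (n + 1), μ a * ν b / m := sum_congr rfl fun b hb => by
          have hbn : b ≤ n := by have := mem_range.mp hb; omega
          by_cases hab : a ≤ b
          · rw [if_pos ⟨hab, hbn⟩]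
          · rcases hsep a b ha (by omega) with h | h <;> simp [h]
      _ = m * μ a / m := by rw [← sum_div, ← mul_sum, mul_comm]
      _ = μ a := hmul_div hμ hmass ha
  · calc ∑ a ∈ range (n + 1), (if a ≤ b ∧ b ≤ n then μ a * ν b / m else 0)
        = ∑ a ∈ range (n + 1), μ a * ν b / m := sum_congr rfl fun a ha => by
          by_cases hab : a ≤ b
          · rw [if_pos ⟨hab, hb⟩]
          · rcases hsep a b (by have := mem_range.mp ha; omega) (by omega) with h | h <;> simp [h]
      _ = m * ν b / m := by rw [← sum_div, ← sum_mul, hmass]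
      _ = ν b := hmul_div hν rfl hb

theorem sum_range_eq_add_sum_ite_lt {x : ℕ} (hx : x ≤ n) (hν : ∀ b < x, ν b = 0) :
    ∑ b ∈ range (n + 1), ν b = ν x + ∑ b ∈ range (n + 1), if x < b then ν b else 0 := by
  have hsplit : ∀ b ∈ range (n + 1),
      ν b = (if x = b then ν b else 0) + if x < b then ν b else 0 := by
    intro b _
    rcases lt_trichotomy b x with h | rfl | h
    · simp [h.ne', hν b h, show ¬x < b by omega]
    · simp
    · simp [h.ne, h]
  rw [sum_congr rfl hsplit, sum_add_distrib, sum_ite_eq, if_pos (mem_range.mpr (by omega))]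

theorem exists_isMonotoneCoupling_of_succ {x : ℕ} (hx : x + 1 ≤ n) (hμ : ∀ a ≤ n, 0 ≤ μ a)
    (hν : ∀ b ≤ n, 0 ≤ ν b) (hμ_supp : ∀ a ≤ n, x + 2 ≤ a → μ a = 0) (hν_supp : ∀ b < x, ν b = 0)
    (hmass : ∑ a ∈ range (n + 1), μ a = ∑ b ∈ range (n + 1), ν b)
    (hcond : μ (x + 1) + ν x ≤ ∑ b ∈ range (n + 1), ν b) :
    ∃ q, IsMonotoneCoupling n μ ν q := by
  set m := ∑ b ∈ range (n + 1), ν b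
  set p := μ (x + 1)
  let μ₁ : ℕ → ℝ := fun a => if a = x + 1 then p else 0
  let νhi : ℕ → ℝ := fun b => if x < b then ν b else 0
  set s := p / (m - ν x)
  let ν₁ : ℕ → ℝ := fun b => s * νhi b
  have hp : 0 ≤ p := hμ _ hx
  have hs₀ : 0 ≤ s := div_nonneg hp (by linarith)
  have hs₁ : s ≤ 1 := div_le_one_of_le₀ (by linarith) (by linarith)
  have hs : s * (m - ν x) = p := div_mul_cancel_of_imp fun h => by linarith
  have hνhi : ν x + ∑ b ∈ range (n + 1), νhi b = m :=
    (sum_range_eq_add_sum_ite_lt (by omega) hν_supp).symm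
  have hμ₁ : ∑ a ∈ range (n + 1), μ₁ a = p := by
    rw [sum_ite_eq', if_pos (mem_range.mpr (by omega))]
  have hν₁ : ∑ b ∈ range (n + 1), ν₁ b = p := by
    rw [← mul_sum, ← hs, ← hνhi, add_sub_cancel_left]
  have h₁ := isMonotoneCoupling_prod (n := n) (μ := μ₁) (ν := ν₁)
    (fun a _ => by dsimp only [μ₁]; split_ifs <;> simp [hp])
    (fun b hb => mul_nonneg hs₀ (by dsimp only [νhi]; split_ifs <;> simp [hν b hb]))
    (hμ₁.trans hν₁.symm)
    (fun a b _ hba => by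
      by_cases ha : a = x + 1
      · exact .inr (by simp [ν₁, νhi, show ¬x < b by omega])
      · exact .inl (if_neg ha))
  have h₂ := isMonotoneCoupling_prod (n := n) (μ := μ - μ₁) (ν := ν - ν₁)
    (fun a ha => by
      by_cases ha₁ : a = x + 1
      · simp [μ₁, ha₁, p]
      · simp [μ₁, ha₁, hμ a ha])
    (fun b hb => by
      have := hν b hb
      by_cases hb₁ : x < b
      · simp only [Pi.sub_apply, ν₁, νhi, if_pos hb₁]
        nlinarith
      · simpa [ν₁, νhi, hb₁] using this)
    (by simp only [Pi.sub_apply, sum_sub_distrib, hμ₁, hν₁, hmass, m])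
    (fun a b ha hba => by
      rcases lt_trichotomy a (x + 1) with h | rfl | h
      · exact .inr (by simp [ν₁, νhi, hν_supp b (by omega), show ¬x < b by omega])
      · exact .inl (by simp [μ₁, p])
      · exact .inl (by simp [μ₁, h.ne', hμ_supp a ha (by omega)]))
  have h := h₁.add h₂
  rw [add_sub_cancel, add_sub_cancel] at h
  exact ⟨_, h⟩

end

/-- A birth-and-death chain on {0,…,n} admits a monotone (order-preserving)
    one-step coupling from every ordered pair of states if and only if
    P(i, i+1) + P(i+1, i) ≤ 1 for every i < n. -/
theorem stmt11 (n : ℕ) (P : ℕ → ℕ → ℝ)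
    (hP0 : ∀ i j, 0 ≤ P i j)
    (hrow : ∀ i, i ≤ n → ∑ j ∈ range (n + 1), P i j = 1)
    (hbd : ∀ i j, i ≤ n → j ≤ n → 1 < ((i : ℤ) - (j : ℤ)).natAbs → P i j = 0) :
    (∀ x y, x ≤ y → y ≤ n →
        ∃ q : ℕ → ℕ → ℝ,
          (∀ a b, 0 ≤ q a b) ∧
          (∀ a, a ≤ n → ∑ b ∈ range (n + 1), q a b = P x a) ∧
          (∀ b, b ≤ n → ∑ a ∈ range (n + 1), q a b = P y b) ∧
          (∀ a b, b < a → q a b = 0))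
      ↔ (∀ i, i + 1 ≤ n → P i (i + 1) + P (i + 1) i ≤ 1) := by
  have hlocal : ∀ i j, i ≤ n → j ≤ n → (j + 2 ≤ i ∨ i + 2 ≤ j) → P i j = 0 :=
    fun i j hi hj hij => hbd i j hi hj (by omega)
  refine ⟨fun h i hi => ?_, fun h x y hxy hyn => ?_⟩
  · obtain ⟨q, hq⟩ := h i (i + 1) (by omega) hi
    simpa only [hrow i (by omega)] using IsMonotoneCoupling.apply_succ_add_apply_le_sum hq hi
  obtain rfl | rfl | hgap : x = y ∨ y = x + 1 ∨ x + 2 ≤ y := by omega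
  · exact ⟨_, isMonotoneCoupling_diag fun a _ => hP0 x a⟩
  · refine exists_isMonotoneCoupling_of_succ hyn (fun a _ => hP0 x a) (fun b _ => hP0 _ b)
      (fun a ha hxa => hlocal x a (by omega) ha (by omega))
      (fun b hb => hlocal _ b hyn (by omega) (by omega))
      (by rw [hrow x (by omega), hrow _ hyn]) ?_
    rw [hrow _ hyn]
    exact h x hyn
  · refine ⟨_, isMonotoneCoupling_prod (fun a _ => hP0 x a) (fun b _ => hP0 y b)
      (by rw [hrow x (by omega), hrow y hyn]) fun a b ha hba => ?_⟩
    by_cases hax : a ≤ x + 1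
    · exact .inr (hlocal y b hyn (by omega) (by omega))
    · exact .inl (hlocal x a (by omega) ha (by omega))
end

section
/- Let λ₂ be the second largest eigenvalue of a reversible, irreducible transition matrix P on a finite state space with stationary distribution π, and let Φ⋆ = min_{S: π(S) ≤ 1/2} Q(S, Sᶜ)/π(S) be the bottleneck ratio, where Q(x,y) = π(x)P(x,y). Then Φ⋆²/2 ≤ 1 − λ₂ ≤ 2Φ⋆. -/
/-!
Upper bound: for a set `S` attaining `Φ⋆`, the test function `f = 1_S - π(S)` has mean zero,
Dirichlet form `E(f) = Q(S, Sᶜ)` and variance `π(S) (1 - π(S)) ≥ π(S) / 2`, so the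
variational bound `(1 - λ₂) Var(f) ≤ E(f)` gives `1 - λ₂ ≤ 2 Φ⋆`. The variational bound is the
spectral theorem for the symmetric matrix `√π(x) P(x,y) / √π(y)`, restricted to the orthogonal
complement of its Perron eigenvector `√π`.

Lower bound: take a `λ₂`-eigenfunction `f` with `π(f > 0) ≤ 1/2` (replace `f` by `-f` if
necessary) and put `g = f⁺`, so that `E(g) ≤ (1 - λ₂) ‖g‖²`. Peeling off the level sets of `g²`,
each of mass at most `1/2`, gives the co-area bound `∑ Q(x,y) |g(x)² - g(y)²| ≥ 2 Φ⋆ ‖g‖²`,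
while Cauchy–Schwarz bounds the same sum by `√(2 E(g)) · 2 ‖g‖`.
-/

open Finset

open Module.End RealInnerProductSpace in
theorem LinearMap.IsSymmetric.inner_apply_self_le_of_hasEigenvalue_le {E : Type*}
    [NormedAddCommGroup E] [InnerProductSpace ℝ E] [FiniteDimensional ℝ E]
    {T : E →ₗ[ℝ] E} (hT : T.IsSymmetric) {c : ℝ} (hc : ∀ μ, HasEigenvalue T μ → μ ≤ c)
    (v : E) : ⟪T v, v⟫ ≤ c * ‖v‖ ^ 2 := by
  rcases eq_or_ne v 0 with rfl | hv
  · simp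
  have : Nontrivial E := ⟨⟨v, 0, hv⟩⟩
  have hbdd : BddAbove (Set.range fun x : { x : E // x ≠ 0 } => ⟪T x, x⟫ / ‖(x : E)‖ ^ 2) :=
    ⟨‖LinearMap.toContinuousLinearMap T‖, by
      rintro _ ⟨x, rfl⟩
      exact (le_abs_self _).trans ((LinearMap.toContinuousLinearMap T).rayleighQuotient_le_norm x)⟩
  have hquot := (le_ciSup hbdd ⟨v, hv⟩).trans (hc _ hT.hasEigenvalue_iSup_of_finiteDimensional)
  rwa [div_le_iff₀ (by positivity)] at hquot

theorem sum_sum_mul_ite_mem_compl {Ω : Type*} [Fintype Ω] [DecidableEq Ω] (Q : Ω → Ω → ℝ)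
    (S : Finset Ω) :
    ∑ x, ∑ y, Q x y * (if x ∈ S then (if y ∈ Sᶜ then 1 else 0) else 0) =
      ∑ x ∈ S, ∑ y ∈ Sᶜ, Q x y := by
  simp only [mul_ite, mul_one, mul_zero, ← ite_sum_zero, sum_ite_mem, univ_inter]

theorem exists_pos_of_sum_mul_eq_zero {Ω : Type*} [Fintype Ω] {π f : Ω → ℝ}
    (hπ : ∀ x, 0 < π x) (hf0 : f ≠ 0) (hf : ∑ x, π x * f x = 0) : ∃ x, 0 < f x := by
  by_contra! h
  refine hf0 (funext fun x => ?_)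
  have hx := (sum_eq_zero_iff_of_nonpos fun x _ =>
    mul_nonpos_of_nonneg_of_nonpos (hπ x).le (h x)).mp hf x (mem_univ x)
  exact (mul_eq_zero.mp hx).resolve_left (hπ x).ne'

theorem sq_sum_sum_abs_sq_sub_sq_le {Ω : Type*} [Fintype Ω] (w : Ω → Ω → ℝ)
    (hw : ∀ x y, 0 ≤ w x y) (g : Ω → ℝ) :
    (∑ x, ∑ y, w x y * |g x ^ 2 - g y ^ 2|) ^ 2 ≤
      (∑ x, ∑ y, w x y * (g x - g y) ^ 2) * ∑ x, ∑ y, w x y * (g x + g y) ^ 2 := by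
  simp only [← Fintype.sum_prod_type']
  refine sum_sq_le_sum_mul_sum_of_sq_le_mul _ (fun p _ => by have := hw p.1 p.2; positivity)
    (fun p _ => by have := hw p.1 p.2; positivity) fun p _ => le_of_eq ?_
  rw [mul_pow, sq_abs]
  ring

section Reversible

variable {Ω : Type*} [Fintype Ω] {P : Ω → Ω → ℝ} {π : Ω → ℝ}

theorem sum_mul_transition_eq (hP1 : ∀ x, ∑ y, P x y = 1)
    (hrev : ∀ x y, π x * P x y = π y * P y x) (y : Ω) : ∑ x, π x * P x y = π y := by
  simp_rw [hrev _ y, ← mul_sum, hP1, mul_one]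

theorem sum_mul_sum_transition_mul (hP1 : ∀ x, ∑ y, P x y = 1)
    (hrev : ∀ x y, π x * P x y = π y * P y x) (g : Ω → ℝ) :
    ∑ x, π x * ∑ y, P x y * g y = ∑ y, π y * g y := by
  simp_rw [mul_sum, ← mul_assoc]
  rw [sum_comm]
  simp_rw [← sum_mul, sum_mul_transition_eq hP1 hrev]

theorem sum_sum_swap_of_reversible (hrev : ∀ x y, π x * P x y = π y * P y x)
    (F : Ω → Ω → ℝ) : ∑ x, ∑ y, π x * P x y * F y x = ∑ x, ∑ y, π x * P x y * F x y := by
  rw [sum_comm]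
  exact sum_congr rfl fun x _ => sum_congr rfl fun y _ => by rw [hrev]

theorem sum_sum_mul_left (hP1 : ∀ x, ∑ y, P x y = 1) (F : Ω → ℝ) :
    ∑ x, ∑ y, π x * P x y * F x = ∑ x, π x * F x := by
  simp_rw [← sum_mul, ← mul_sum, hP1, mul_one]

theorem sum_sum_abs_sub_eq (hrev : ∀ x y, π x * P x y = π y * P y x) (F : Ω → ℝ) :
    ∑ x, ∑ y, π x * P x y * |F x - F y| = 2 * ∑ x, ∑ y, π x * P x y * (F x - F y)⁺ := by
  simp_rw [← posPart_add_negPart, ← posPart_neg, neg_sub, mul_add, sum_add_distrib,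
    sum_sum_swap_of_reversible hrev fun x y => (F x - F y)⁺]
  ring

theorem sum_sum_sq_add_le (hP0 : ∀ x y, 0 ≤ P x y) (hP1 : ∀ x, ∑ y, P x y = 1)
    (hπ : ∀ x, 0 ≤ π x) (hrev : ∀ x y, π x * P x y = π y * P y x) (g : Ω → ℝ) :
    ∑ x, ∑ y, π x * P x y * (g x + g y) ^ 2 ≤ 4 * ∑ x, π x * g x ^ 2 := by
  calc ∑ x, ∑ y, π x * P x y * (g x + g y) ^ 2
      ≤ ∑ x, ∑ y, π x * P x y * (2 * g x ^ 2 + 2 * g y ^ 2) := by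
        gcongr with x _ y _
        · exact mul_nonneg (hπ x) (hP0 x y)
        · nlinarith [sq_nonneg (g x - g y)]
    _ = 4 * ∑ x, π x * g x ^ 2 := by
        simp_rw [mul_add, sum_add_distrib,
          sum_sum_swap_of_reversible hrev fun x _ => 2 * g x ^ 2, sum_sum_mul_left hP1, mul_sum]
        rw [← sum_add_distrib]
        exact sum_congr rfl fun x _ => by ring

variable (P π) in
noncomputable def dirichletForm (f : Ω → ℝ) : ℝ :=
  (∑ x, ∑ y, π x * P x y * (f x - f y) ^ 2) / 2

theorem dirichletForm_eq (hP1 : ∀ x, ∑ y, P x y = 1)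
    (hrev : ∀ x y, π x * P x y = π y * P y x) (f : Ω → ℝ) :
    dirichletForm P π f = ∑ x, π x * f x * (f x - ∑ y, P x y * f y) := by
  have hsq (x y : Ω) : (f x - f y) ^ 2 = f x * (f x - f y) + f y * (f y - f x) := by ring
  have hrow (x : Ω) : ∑ y, π x * P x y * (f x * (f x - f y)) =
      π x * f x * (f x - ∑ y, P x y * f y) := by
    have hsplit : ∑ y, π x * P x y * (f x * (f x - f y)) =
        π x * f x * ∑ y, (P x y * f x - P x y * f y) :=
      (sum_congr rfl fun y _ => by ring).trans (mul_sum _ _ _).symm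
    rw [hsplit, sum_sub_distrib, ← sum_mul, hP1, one_mul]
  simp_rw [dirichletForm, hsq, mul_add, sum_add_distrib,
    sum_sum_swap_of_reversible hrev fun x y => f x * (f x - f y), hrow]
  ring

theorem dirichletForm_nonneg (hP0 : ∀ x y, 0 ≤ P x y) (hπ : ∀ x, 0 ≤ π x) (f : Ω → ℝ) :
    0 ≤ dirichletForm P π f :=
  div_nonneg (sum_nonneg fun x _ => sum_nonneg fun y _ =>
    mul_nonneg (mul_nonneg (hπ x) (hP0 x y)) (sq_nonneg _)) zero_le_two

theorem dirichletForm_indicator_sub [DecidableEq Ω] (hrev : ∀ x y, π x * P x y = π y * P y x)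
    (S : Finset Ω) (c : ℝ) :
    dirichletForm P π (fun x => (if x ∈ S then 1 else 0) - c) =
      ∑ x ∈ S, ∑ y ∈ Sᶜ, π x * P x y := by
  set F : Ω → Ω → ℝ := fun x y => if x ∈ S then (if y ∈ Sᶜ then 1 else 0) else 0
  have hsq (x y : Ω) : ((if x ∈ S then 1 else 0) - c - ((if y ∈ S then 1 else 0) - c)) ^ 2 =
      F x y + F y x := by
    simp only [F, mem_compl]; split_ifs <;> ring
  simp_rw [dirichletForm, hsq, mul_add, sum_add_distrib, sum_sum_swap_of_reversible hrev F,
    F, sum_sum_mul_ite_mem_compl]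
  ring

theorem dirichletForm_posPart_le (hP0 : ∀ x y, 0 ≤ P x y) (hP1 : ∀ x, ∑ y, P x y = 1)
    (hπ : ∀ x, 0 ≤ π x) (hrev : ∀ x y, π x * P x y = π y * P y x) {lam : ℝ} {f : Ω → ℝ}
    (hf : ∀ x, ∑ y, P x y * f y = lam * f x) :
    dirichletForm P π (fun x => (f x)⁺) ≤ (1 - lam) * ∑ x, π x * (f x)⁺ ^ 2 := by
  rw [dirichletForm_eq hP1 hrev, mul_sum]
  refine sum_le_sum fun x _ => ?_
  rcases le_or_gt (f x) 0 with hx | hx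
  · simp [posPart_eq_zero.mpr hx]
  have hPf : lam * f x ≤ ∑ y, P x y * (f y)⁺ :=
    hf x ▸ sum_le_sum fun y _ => mul_le_mul_of_nonneg_left (le_posPart _) (hP0 x y)
  rw [posPart_eq_self.mpr hx.le]
  nlinarith [mul_le_mul_of_nonneg_left hPf (mul_nonneg (hπ x) hx.le)]

end Reversible

section Symmetrization

variable {Ω : Type*} (P : Ω → Ω → ℝ) (π : Ω → ℝ)

open RealInnerProductSpace

/-- `D^{1/2} P D^{-1/2}` with `D = diag π`. -/
noncomputable def symmetrizedKernel : Matrix Ω Ω ℝ :=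
  Matrix.of fun x y => √(π x) * P x y / √(π y)

noncomputable def embedL2 : (Ω → ℝ) →ₗ[ℝ] EuclideanSpace ℝ Ω where
  toFun f := WithLp.toLp 2 fun x => √(π x) * f x
  map_add' f g := by ext x; simp [mul_add]
  map_smul' c f := by ext x; simp; ring

variable {P π}

theorem embedL2_apply (f : Ω → ℝ) (x : Ω) : embedL2 π f x = √(π x) * f x := rfl

theorem inner_embedL2 [Fintype Ω] (hπ : ∀ x, 0 ≤ π x) (f g : Ω → ℝ) :
    ⟪embedL2 π f, embedL2 π g⟫ = ∑ x, π x * f x * g x := by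
  simp only [PiLp.inner_apply, embedL2_apply, RCLike.inner_apply, conj_trivial]
  refine sum_congr rfl fun x _ => ?_
  linear_combination (f x * g x) * Real.mul_self_sqrt (hπ x)

theorem embedL2_injective (hπ : ∀ x, 0 < π x) : Function.Injective (embedL2 π) := by
  intro f g hfg
  funext x
  have := congrArg (fun w : EuclideanSpace ℝ Ω => w x) hfg
  exact mul_left_cancel₀ (Real.sqrt_pos.mpr (hπ x)).ne' this

theorem embedL2_surjective (hπ : ∀ x, 0 < π x) : Function.Surjective (embedL2 π) :=
  fun w => ⟨fun x => w x / √(π x), by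
    ext x
    exact mul_div_cancel₀ _ (Real.sqrt_pos.mpr (hπ x)).ne'⟩

theorem toEuclideanLin_symmetrizedKernel_embedL2 [Fintype Ω] [DecidableEq Ω]
    (hπ : ∀ x, 0 < π x) (f : Ω → ℝ) :
    (symmetrizedKernel P π).toEuclideanLin (embedL2 π f) =
      embedL2 π fun x => ∑ y, P x y * f y := by
  ext x
  simp only [Matrix.toEuclideanLin, Matrix.toLpLin_apply, embedL2_apply, symmetrizedKernel,
    Matrix.mulVec, dotProduct, Matrix.of_apply, mul_sum]
  refine sum_congr rfl fun y _ => ?_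
  field_simp [(Real.sqrt_pos.mpr (hπ y)).ne']

theorem symmetrizedKernel_isHermitian (hπ : ∀ x, 0 < π x)
    (hrev : ∀ x y, π x * P x y = π y * P y x) : (symmetrizedKernel P π).IsHermitian := by
  ext x y
  have hx := Real.sqrt_pos.mpr (hπ x)
  have hy := Real.sqrt_pos.mpr (hπ y)
  simp only [Matrix.conjTranspose_apply, symmetrizedKernel, Matrix.of_apply, star_trivial]
  rw [div_eq_div_iff hx.ne' hy.ne']
  linear_combination Real.mul_self_sqrt (hπ y).le * P y x - Real.mul_self_sqrt (hπ x).le * P x y +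
    hrev y x

open Module.End in
theorem sum_mul_sum_transition_le [Fintype Ω] {lam2 : ℝ} (hP1 : ∀ x, ∑ y, P x y = 1)
    (hπ : ∀ x, 0 < π x) (hrev : ∀ x y, π x * P x y = π y * P y x)
    (hmax : ∀ (lam : ℝ) (f : Ω → ℝ), f ≠ 0 → (∑ x, π x * f x = 0) →
      (∀ x, ∑ y, P x y * f y = lam * f x) → lam ≤ lam2)
    (f : Ω → ℝ) (hf : ∑ x, π x * f x = 0) :
    ∑ x, π x * f x * ∑ y, P x y * f y ≤ lam2 * ∑ x, π x * f x ^ 2 := by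
  classical
  set T := (symmetrizedKernel P π).toEuclideanLin
  have hT : T.IsSymmetric :=
    Matrix.isSymmetric_toEuclideanLin_iff.mpr (symmetrizedKernel_isHermitian hπ hrev)
  have hTembed (g : Ω → ℝ) : T (embedL2 π g) = embedL2 π fun x => ∑ y, P x y * g y :=
    toEuclideanLin_symmetrizedKernel_embedL2 hπ g
  have hinner := inner_embedL2 fun x => (hπ x).le
  set V := (ℝ ∙ embedL2 π 1)ᗮ
  have hmemV (g : Ω → ℝ) : embedL2 π g ∈ V ↔ ∑ x, π x * g x = 0 := by
    simp [V, Submodule.mem_orthogonal_singleton_iff_inner_right, hinner]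
  have hV : ∀ w ∈ V, T w ∈ V := by
    intro w hw
    obtain ⟨g, rfl⟩ := embedL2_surjective hπ w
    rw [hTembed, hmemV, sum_mul_sum_transition_mul hP1 hrev, ← hmemV]
    exact hw
  have heig (μ : ℝ) (hμ : HasEigenvalue (T.restrict hV) μ) : μ ≤ lam2 := by
    obtain ⟨⟨w, hwV⟩, hw⟩ := hμ.exists_hasEigenvector
    obtain ⟨g, rfl⟩ := embedL2_surjective hπ w
    have hTg : T (embedL2 π g) = μ • embedL2 π g := congrArg Subtype.val hw.apply_eq_smul
    rw [hTembed, ← map_smul] at hTg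
    refine hmax μ g ?_ ((hmemV g).mp hwV) fun x => congrFun (embedL2_injective hπ hTg) x
    rintro rfl
    exact hw.2 (by simp)
  have key := (hT.restrict_invariant hV).inner_apply_self_le_of_hasEigenvalue_le heig
    ⟨embedL2 π f, (hmemV f).mpr hf⟩
  rw [Submodule.coe_inner, Submodule.coe_norm, ← real_inner_self_eq_norm_sq,
    LinearMap.coe_restrict_apply, real_inner_comm, hTembed] at key
  simpa only [hinner, sq, mul_assoc] using key

end Symmetrization

section SpectralGap

variable {Ω : Type*} [Fintype Ω] {P : Ω → Ω → ℝ} {π : Ω → ℝ}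

theorem one_sub_mul_sum_sq_le_dirichletForm {lam2 : ℝ}
    (hP1 : ∀ x, ∑ y, P x y = 1) (hπ : ∀ x, 0 < π x) (hrev : ∀ x y, π x * P x y = π y * P y x)
    (hmax : ∀ (lam : ℝ) (f : Ω → ℝ), f ≠ 0 → (∑ x, π x * f x = 0) →
      (∀ x, ∑ y, P x y * f y = lam * f x) → lam ≤ lam2)
    (f : Ω → ℝ) (hf : ∑ x, π x * f x = 0) :
    (1 - lam2) * ∑ x, π x * f x ^ 2 ≤ dirichletForm P π f := by
  have hray := sum_mul_sum_transition_le hP1 hπ hrev hmax f hf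
  have hsplit : ∑ x, π x * f x * (f x - ∑ y, P x y * f y) =
      ∑ x, π x * f x ^ 2 - ∑ x, π x * f x * ∑ y, P x y * f y := by
    rw [← sum_sub_distrib]
    exact sum_congr rfl fun x _ => by ring
  rw [dirichletForm_eq hP1 hrev, hsplit]
  linarith

theorem one_sub_le_two_mul_cut_div [DecidableEq Ω] {lam2 : ℝ}
    (hP0 : ∀ x y, 0 ≤ P x y) (hP1 : ∀ x, ∑ y, P x y = 1) (hπ : ∀ x, 0 < π x)
    (hπ1 : ∑ x, π x = 1) (hrev : ∀ x y, π x * P x y = π y * P y x)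
    (hmax : ∀ (lam : ℝ) (f : Ω → ℝ), f ≠ 0 → (∑ x, π x * f x = 0) →
      (∀ x, ∑ y, P x y * f y = lam * f x) → lam ≤ lam2)
    (S : Finset Ω) (hS0 : 0 < ∑ x ∈ S, π x) (hS : ∑ x ∈ S, π x ≤ 1 / 2) :
    1 - lam2 ≤ 2 * ((∑ x ∈ S, ∑ y ∈ Sᶜ, π x * P x y) / ∑ x ∈ S, π x) := by
  set a := ∑ x ∈ S, π x
  set f : Ω → ℝ := fun x => (if x ∈ S then 1 else 0) - a
  have hind : ∑ x, π x * (if x ∈ S then 1 else 0) = a := by simp [a, mul_ite, sum_ite_mem]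
  have hmean : ∑ x, π x * f x = 0 := by
    simp only [f, mul_sub, sum_sub_distrib, hind, ← sum_mul, hπ1, one_mul, sub_self]
  have hvar : ∑ x, π x * f x ^ 2 = a * (1 - a) := by
    have hpt (x : Ω) :
        π x * f x ^ 2 = π x * (if x ∈ S then 1 else 0) * (1 - 2 * a) + a ^ 2 * π x := by
      simp only [f]; split_ifs <;> ring
    simp only [hpt, sum_add_distrib, ← sum_mul, ← mul_sum, hind, hπ1]
    ring
  have hgap := one_sub_mul_sum_sq_le_dirichletForm hP1 hπ hrev hmax f hmean
  have hcut := dirichletForm_nonneg hP0 (fun x => (hπ x).le) f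
  rw [hvar] at hgap
  rw [dirichletForm_indicator_sub hrev] at hgap hcut
  rw [mul_div_assoc', le_div_iff₀ hS0]
  nlinarith

end SpectralGap

section Bottleneck

variable {Ω : Type*} [Fintype Ω] [DecidableEq Ω]

theorem sum_sum_mul_posPart_sub_eq (Q : Ω → Ω → ℝ) (S : Finset Ω) {h : Ω → ℝ} {m : ℝ}
    (hh : ∀ x, 0 ≤ h x) (hzero : ∀ x ∉ S, h x = 0) (hmin : ∀ x ∈ S, m ≤ h x) :
    ∑ x, ∑ y, Q x y * (h x - h y)⁺ =
      ∑ x, ∑ y, Q x y * (h x - (if x ∈ S then m else 0) - (h y - if y ∈ S then m else 0))⁺ +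
        m * ∑ x ∈ S, ∑ y ∈ Sᶜ, Q x y := by
  have hpt (x y : Ω) : (h x - h y)⁺ =
      (h x - (if x ∈ S then m else 0) - (h y - if y ∈ S then m else 0))⁺ +
        m * (if x ∈ S then (if y ∈ Sᶜ then 1 else 0) else 0) := by
    by_cases hx : x ∈ S <;> by_cases hy : y ∈ S <;> simp [hx, hy, hzero, hh, hmin, sub_nonneg]
  simp_rw [hpt, mul_add, sum_add_distrib, ← sum_sum_mul_ite_mem_compl, mul_sum]
  congr! 3
  ring

variable {P : Ω → Ω → ℝ} {π : Ω → ℝ}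

theorem bottleneck_mul_sum_le_sum_posPart (hπ : ∀ x, 0 ≤ π x) {Φ : ℝ}
    (hΦ : ∀ S : Finset Ω, ∑ x ∈ S, π x ≤ 1 / 2 →
      Φ * ∑ x ∈ S, π x ≤ ∑ x ∈ S, ∑ y ∈ Sᶜ, π x * P x y)
    (h : Ω → ℝ) (hh : ∀ x, 0 ≤ h x) (hsupp : ∑ x ∈ univ.filter (0 < h ·), π x ≤ 1 / 2) :
    Φ * ∑ x, π x * h x ≤ ∑ x, ∑ y, π x * P x y * (h x - h y)⁺ := by
  suffices ∀ S : Finset Ω, ∀ h : Ω → ℝ, (∀ x, 0 ≤ h x) → univ.filter (0 < h ·) = S →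
      ∑ x ∈ S, π x ≤ 1 / 2 → Φ * ∑ x, π x * h x ≤ ∑ x, ∑ y, π x * P x y * (h x - h y)⁺ from
    this _ h hh rfl hsupp
  intro S
  induction S using Finset.strongInduction with
  | H S ih =>
  intro h hh hS hhalf
  have hmem (x : Ω) : x ∈ S ↔ 0 < h x := by simp [← hS]
  have hzero (x : Ω) (hx : x ∉ S) : h x = 0 := (hh x).antisymm' (not_lt.mp (mt (hmem x).mpr hx))
  rcases S.eq_empty_or_nonempty with rfl | hne
  · simp [hzero]
  -- `h = h' + m • 1_S` with `m` the smallest positive value of `h`, so `h'` has smaller support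
  obtain ⟨x₀, hx₀, hmin⟩ := S.exists_min_image h hne
  set m := h x₀
  have hm : 0 < m := (hmem x₀).mp hx₀
  set h' : Ω → ℝ := fun x => h x - if x ∈ S then m else 0
  have hh' (x : Ω) : 0 ≤ h' x := by
    by_cases hx : x ∈ S <;> simp [h', hx, hmin x, hh x]
  have hS' : univ.filter (0 < h' ·) ⊂ S := by
    refine ssubset_iff_of_subset (fun x hx => ?_) |>.mpr ⟨x₀, hx₀, by simp [h', hx₀, m]⟩
    by_contra hxS
    simp [h', hxS, hzero x hxS] at hx
  have IH := ih _ hS' h' hh' rfl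
    ((sum_le_sum_of_subset_of_nonneg hS'.subset fun x _ _ => hπ x).trans hhalf)
  have hmass : ∑ x, π x * h x = ∑ x, π x * h' x + m * ∑ x ∈ S, π x := by
    simp only [h', mul_sub, sum_sub_distrib, mul_ite, mul_zero, sum_ite_mem, univ_inter,
      ← sum_mul]
    ring
  have hcut := mul_le_mul_of_nonneg_left (hΦ S hhalf) hm.le
  rw [hmass, sum_sum_mul_posPart_sub_eq _ S hh hzero hmin]
  linarith

theorem sq_le_two_mul_one_sub_of_eigenfunction (hP0 : ∀ x y, 0 ≤ P x y)
    (hP1 : ∀ x, ∑ y, P x y = 1) (hπ : ∀ x, 0 < π x) (hrev : ∀ x y, π x * P x y = π y * P y x)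
    {Φ lam : ℝ} (hΦ0 : 0 ≤ Φ)
    (hΦ : ∀ S : Finset Ω, ∑ x ∈ S, π x ≤ 1 / 2 →
      Φ * ∑ x ∈ S, π x ≤ ∑ x ∈ S, ∑ y ∈ Sᶜ, π x * P x y)
    {f : Ω → ℝ} (hf : ∀ x, ∑ y, P x y * f y = lam * f x) (hpos : ∃ x, 0 < f x)
    (hhalf : ∑ x ∈ univ.filter (0 < f ·), π x ≤ 1 / 2) :
    Φ ^ 2 ≤ 2 * (1 - lam) := by
  set g : Ω → ℝ := fun x => (f x)⁺
  set N := ∑ x, π x * g x ^ 2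
  have hN : 0 < N := by
    obtain ⟨x, hx⟩ := hpos
    exact sum_pos' (fun y _ => mul_nonneg (hπ y).le (sq_nonneg _))
      ⟨x, mem_univ x, mul_pos (hπ x) (pow_pos (posPart_pos hx) 2)⟩
  have hQ (x y : Ω) : 0 ≤ π x * P x y := mul_nonneg (hπ x).le (hP0 x y)
  set K := ∑ x, ∑ y, π x * P x y * |g x ^ 2 - g y ^ 2|
  have hlow : 2 * (Φ * N) ≤ K := by
    have hsupp : univ.filter (fun x => 0 < g x ^ 2) = univ.filter (0 < f ·) := by
      ext x; simp [g, sq_pos_iff, posPart_eq_zero]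
    have hcoarea : Φ * N ≤ ∑ x, ∑ y, π x * P x y * (g x ^ 2 - g y ^ 2)⁺ :=
      bottleneck_mul_sum_le_sum_posPart (fun x => (hπ x).le) hΦ (fun x => g x ^ 2)
        (fun x => sq_nonneg _) (hsupp ▸ hhalf)
    have hK : K = 2 * ∑ x, ∑ y, π x * P x y * (g x ^ 2 - g y ^ 2)⁺ :=
      sum_sum_abs_sub_eq hrev fun x => g x ^ 2
    linarith
  have hup : K ^ 2 ≤ 2 * dirichletForm P π g * (4 * N) := by
    refine (sq_sum_sum_abs_sq_sub_sq_le _ hQ g).trans (mul_le_mul (le_of_eq ?_)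
      (sum_sum_sq_add_le hP0 hP1 (fun x => (hπ x).le) hrev g)
      (sum_nonneg fun x _ => sum_nonneg fun y _ => mul_nonneg (hQ x y) (sq_nonneg _))
      (mul_nonneg zero_le_two (dirichletForm_nonneg hP0 (fun x => (hπ x).le) g)))
    unfold dirichletForm
    ring
  have hE : dirichletForm P π g ≤ (1 - lam) * N :=
    dirichletForm_posPart_le hP0 hP1 (fun x => (hπ x).le) hrev hf
  have hsq := pow_le_pow_left₀ (by positivity) hlow 2
  have h : Φ ^ 2 * (4 * N ^ 2) ≤ 2 * (1 - lam) * (4 * N ^ 2) := by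
    nlinarith [mul_le_mul_of_nonneg_right hE hN.le]
  exact le_of_mul_le_mul_right h (by positivity)

theorem sq_le_two_mul_one_sub_of_sum_mul_eq_zero (hP0 : ∀ x y, 0 ≤ P x y)
    (hP1 : ∀ x, ∑ y, P x y = 1) (hπ : ∀ x, 0 < π x) (hπ1 : ∑ x, π x = 1)
    (hrev : ∀ x y, π x * P x y = π y * P y x) {Φ lam : ℝ} (hΦ0 : 0 ≤ Φ)
    (hΦ : ∀ S : Finset Ω, ∑ x ∈ S, π x ≤ 1 / 2 →
      Φ * ∑ x ∈ S, π x ≤ ∑ x ∈ S, ∑ y ∈ Sᶜ, π x * P x y)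
    {f : Ω → ℝ} (hf0 : f ≠ 0) (hmean : ∑ x, π x * f x = 0)
    (hf : ∀ x, ∑ y, P x y * f y = lam * f x) :
    Φ ^ 2 ≤ 2 * (1 - lam) := by
  have hsplit : ∑ x ∈ univ.filter (0 < f ·), π x + ∑ x ∈ univ.filter (0 < (-f) ·), π x ≤ 1 := by
    rw [← hπ1, sum_filter, sum_filter, ← sum_add_distrib]
    refine sum_le_sum fun x _ => ?_
    simp only [Pi.neg_apply, neg_pos]
    split_ifs <;> linarith [hπ x]
  rcases le_or_gt (∑ x ∈ univ.filter (0 < f ·), π x) (1 / 2) with hhalf | hhalf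
  · exact sq_le_two_mul_one_sub_of_eigenfunction hP0 hP1 hπ hrev hΦ0 hΦ hf
      (exists_pos_of_sum_mul_eq_zero hπ hf0 hmean) hhalf
  · refine sq_le_two_mul_one_sub_of_eigenfunction hP0 hP1 hπ hrev hΦ0 hΦ (f := -f)
      (fun x => by simp [hf]) (exists_pos_of_sum_mul_eq_zero hπ (neg_ne_zero.mpr hf0) ?_)
      (by linarith)
    simp [hmean]

end Bottleneck

theorem stmt17_general {Ω : Type*} [Fintype Ω] [DecidableEq Ω]
    (P : Ω → Ω → ℝ) (π : Ω → ℝ) (lam2 Φstar : ℝ)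
    (hP0 : ∀ x y, 0 ≤ P x y) (hP1 : ∀ x, ∑ y, P x y = 1)
    (hπ0 : ∀ x, 0 < π x) (hπ1 : ∑ x, π x = 1)
    (hrev : ∀ x y, π x * P x y = π y * P y x)
    -- lam2 is the second largest eigenvalue: it is attained by an eigenfunction
    -- orthogonal to the constants, and dominates all such eigenvalues.
    (heig : ∃ f : Ω → ℝ, f ≠ 0 ∧ (∑ x, π x * f x = 0) ∧
      ∀ x, ∑ y, P x y * f y = lam2 * f x)
    (hmax : ∀ (lam : ℝ) (f : Ω → ℝ), f ≠ 0 → (∑ x, π x * f x = 0) →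
      (∀ x, ∑ y, P x y * f y = lam * f x) → lam ≤ lam2)
    -- Φstar is the bottleneck ratio: the minimum of Q(S,Sᶜ)/π(S) over sets S
    -- with 0 < π(S) ≤ 1/2.
    (hΦub : ∀ S : Finset Ω, 0 < (∑ x ∈ S, π x) → (∑ x ∈ S, π x) ≤ 1 / 2 →
      Φstar ≤ (∑ x ∈ S, ∑ y ∈ Sᶜ, π x * P x y) / ∑ x ∈ S, π x)
    (hΦmem : ∃ S : Finset Ω, 0 < (∑ x ∈ S, π x) ∧ (∑ x ∈ S, π x) ≤ 1 / 2 ∧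
      Φstar = (∑ x ∈ S, ∑ y ∈ Sᶜ, π x * P x y) / ∑ x ∈ S, π x) :
    Φstar ^ 2 / 2 ≤ 1 - lam2 ∧ 1 - lam2 ≤ 2 * Φstar := by
  have hcut (S : Finset Ω) : 0 ≤ ∑ x ∈ S, ∑ y ∈ Sᶜ, π x * P x y :=
    sum_nonneg fun x _ => sum_nonneg fun y _ => mul_nonneg (hπ0 x).le (hP0 x y)
  obtain ⟨S, hS0, hS, hΦS⟩ := hΦmem
  have hΦ0 : 0 ≤ Φstar := hΦS ▸ div_nonneg (hcut S) hS0.le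
  have hΦ (T : Finset Ω) (hT : ∑ x ∈ T, π x ≤ 1 / 2) :
      Φstar * ∑ x ∈ T, π x ≤ ∑ x ∈ T, ∑ y ∈ Tᶜ, π x * P x y := by
    rcases (sum_nonneg fun x _ => (hπ0 x).le : 0 ≤ ∑ x ∈ T, π x).eq_or_lt with hT0 | hT0
    · simpa [← hT0] using hcut T
    · exact (le_div_iff₀ hT0).mp (hΦub T hT0 hT)
  obtain ⟨f, hf0, hmean, hf⟩ := heig
  refine ⟨?_, hΦS ▸ one_sub_le_two_mul_cut_div hP0 hP1 hπ0 hπ1 hrev hmax S hS0 hS⟩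
  linarith [sq_le_two_mul_one_sub_of_sum_mul_eq_zero hP0 hP1 hπ0 hπ1 hrev hΦ0 hΦ hf0 hmean hf]

/-- Cheeger's inequality: for a reversible irreducible finite chain with
    second largest eigenvalue λ₂ and bottleneck ratio Φ⋆,
    Φ⋆²/2 ≤ 1 − λ₂ ≤ 2Φ⋆. -/
theorem stmt17 {Ω : Type*} [Fintype Ω] [Nonempty Ω] [DecidableEq Ω]
    (P : Ω → Ω → ℝ) (π : Ω → ℝ) (lam2 Φstar : ℝ)
    (hP0 : ∀ x y, 0 ≤ P x y) (hP1 : ∀ x, ∑ y, P x y = 1)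
    (hπ0 : ∀ x, 0 < π x) (hπ1 : ∑ x, π x = 1)
    (hrev : ∀ x y, π x * P x y = π y * P y x)
    (hirr : ∀ x y : Ω, ∃ t : ℕ, 0 < ((Matrix.of P) ^ t) x y)
    -- lam2 is the second largest eigenvalue: it is attained by an eigenfunction
    -- orthogonal to the constants, and dominates all such eigenvalues.
    (heig : ∃ f : Ω → ℝ, f ≠ 0 ∧ (∑ x, π x * f x = 0) ∧
      ∀ x, ∑ y, P x y * f y = lam2 * f x)
    (hmax : ∀ (lam : ℝ) (f : Ω → ℝ), f ≠ 0 → (∑ x, π x * f x = 0) →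
      (∀ x, ∑ y, P x y * f y = lam * f x) → lam ≤ lam2)
    -- Φstar is the bottleneck ratio: the minimum of Q(S,Sᶜ)/π(S) over sets S
    -- with 0 < π(S) ≤ 1/2.
    (hΦub : ∀ S : Finset Ω, 0 < (∑ x ∈ S, π x) → (∑ x ∈ S, π x) ≤ 1 / 2 →
      Φstar ≤ (∑ x ∈ S, ∑ y ∈ Sᶜ, π x * P x y) / ∑ x ∈ S, π x)
    (hΦmem : ∃ S : Finset Ω, 0 < (∑ x ∈ S, π x) ∧ (∑ x ∈ S, π x) ≤ 1 / 2 ∧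
      Φstar = (∑ x ∈ S, ∑ y ∈ Sᶜ, π x * P x y) / ∑ x ∈ S, π x) :
    Φstar ^ 2 / 2 ≤ 1 - lam2 ∧ 1 - lam2 ≤ 2 * Φstar :=
  stmt17_general P π lam2 Φstar hP0 hP1 hπ0 hπ1 hrev heig hmax hΦub hΦmem
end

section
/- Let P be an ergodic transition kernel on a finite metric space (Ω, dist) and suppose there is a Markovian coupling of two copies of the chain such that for all σ, σ̃ in the same fiber of a P-preserved partition, E[dist(X₁, X̃₁)] ≤ (1 − c/n)·dist(σ, σ̃). Then every eigenvalue λ of P with eigenfunction f that is non-constant on some fiber and has Lipschitz constant lip(f) > 0 (with respect to dist restricted to fibers) satisfies 1 − λ ≥ c/n. -/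
/-!
Couple one step of the chain from two states `σ, σ'` of a common fiber. Then
`λ (f σ - f σ') = E[f X₁ - f X̃₁]`, and since the coupling stays inside fibers, where `f` is
`L`-Lipschitz, this is at most `L · E[d X₁ X̃₁] ≤ (1 - c/n) L d σ σ'`. Evaluating at a pair
realising the Lipschitz constant `L > 0` gives `|λ| ≤ 1 - c/n`.
-/

open Finset

section Coupling

variable {Ω : Type*} [Fintype Ω]

theorem sum_mul_sub_sum_mul_eq_of_marginals (q : Ω → Ω → ℝ) (μ ν g : Ω → ℝ)
    (hμ : ∀ a, ∑ b, q a b = μ a) (hν : ∀ b, ∑ a, q a b = ν b) :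
    ∑ a, μ a * g a - ∑ b, ν b * g b = ∑ a, ∑ b, q a b * (g a - g b) := by
  simp only [← hμ, ← hν, sum_mul, mul_sub, sum_sub_distrib]
  rw [sum_comm (f := fun b a => q a b * g b)]

theorem abs_sum_coupling_le (q : Ω → Ω → ℝ) (d : Ω → Ω → ℝ) (g : Ω → ℝ) (L : ℝ)
    (hq0 : ∀ a b, 0 ≤ q a b) (hg : ∀ a b, q a b ≠ 0 → |g a - g b| ≤ L * d a b) :
    |∑ a, ∑ b, q a b * (g a - g b)| ≤ L * ∑ a, ∑ b, q a b * d a b := by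
  have hterm : ∀ a b, |q a b * (g a - g b)| ≤ L * (q a b * d a b) := fun a b => by
    rcases eq_or_ne (q a b) 0 with hq | hq
    · simp [hq]
    · rw [abs_mul, abs_of_nonneg (hq0 a b), mul_left_comm]
      exact mul_le_mul_of_nonneg_left (hg a b hq) (hq0 a b)
  calc |∑ a, ∑ b, q a b * (g a - g b)|
      ≤ ∑ a, ∑ b, |q a b * (g a - g b)| :=
        (abs_sum_le_sum_abs _ _).trans (sum_le_sum fun a _ => abs_sum_le_sum_abs _ _)
    _ ≤ ∑ a, ∑ b, L * (q a b * d a b) := sum_le_sum fun a _ => sum_le_sum fun b _ => hterm a b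
    _ = L * ∑ a, ∑ b, q a b * d a b := by simp only [mul_sum]

/-- The contraction estimate `lip(P f) ≤ κ · lip(f)`, on a single pair of a common fiber. -/
theorem abs_sub_le_of_coupling_contracts {I : Type*} (P d : Ω → Ω → ℝ) (fiber : Ω → I)
    (q : Ω → Ω → Ω → Ω → ℝ) (κ L : ℝ) (f : Ω → ℝ) (hL : 0 ≤ L) (hd0 : ∀ x, d x x = 0)
    (hq0 : ∀ σ σ' a b, 0 ≤ q σ σ' a b)
    (hq1 : ∀ σ σ', fiber σ = fiber σ' → ∀ a, ∑ b, q σ σ' a b = P σ a)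
    (hq2 : ∀ σ σ', fiber σ = fiber σ' → ∀ b, ∑ a, q σ σ' a b = P σ' b)
    (hqfib : ∀ σ σ', fiber σ = fiber σ' → ∀ a b, q σ σ' a b ≠ 0 → fiber a = fiber b)
    (hcontr : ∀ σ σ', fiber σ = fiber σ' → ∑ a, ∑ b, q σ σ' a b * d a b ≤ κ * d σ σ')
    (hLub : ∀ σ σ', σ ≠ σ' → fiber σ = fiber σ' → |f σ - f σ'| ≤ L * d σ σ')
    {σ σ' : Ω} (hfib : fiber σ = fiber σ') :
    |∑ a, P σ a * f a - ∑ a, P σ' a * f a| ≤ κ * (L * d σ σ') := by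
  have hlip : ∀ a b, q σ σ' a b ≠ 0 → |f a - f b| ≤ L * d a b := fun a b hq => by
    rcases eq_or_ne a b with rfl | hab
    · simp [hd0]
    · exact hLub a b hab (hqfib σ σ' hfib a b hq)
  rw [sum_mul_sub_sum_mul_eq_of_marginals (q σ σ') _ _ f (hq1 σ σ' hfib) (hq2 σ σ' hfib)]
  calc _ ≤ L * ∑ a, ∑ b, q σ σ' a b * d a b := abs_sum_coupling_le _ d f L (hq0 σ σ') hlip
    _ ≤ L * (κ * d σ σ') := mul_le_mul_of_nonneg_left (hcontr σ σ' hfib) hL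
    _ = κ * (L * d σ σ') := mul_left_comm _ _ _

end Coupling

theorem stmt18_general {Ω I : Type*} [Fintype Ω]
    (P : Ω → Ω → ℝ) (d : Ω → Ω → ℝ) (fiber : Ω → I)
    (q : Ω → Ω → Ω → Ω → ℝ) (c n : ℝ)
    (hd0 : ∀ x, d x x = 0)
    (hdpos : ∀ x y, x ≠ y → 0 < d x y)
    -- q σ σ' is a coupling of one step of the chain from σ and from σ',
    -- supported on pairs in a common fiber, contracting the distance.
    (hq0 : ∀ σ σ' a b, 0 ≤ q σ σ' a b)
    (hq1 : ∀ σ σ', fiber σ = fiber σ' → ∀ a, ∑ b, q σ σ' a b = P σ a)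
    (hq2 : ∀ σ σ', fiber σ = fiber σ' → ∀ b, ∑ a, q σ σ' a b = P σ' b)
    (hqfib : ∀ σ σ', fiber σ = fiber σ' → ∀ a b, q σ σ' a b ≠ 0 → fiber a = fiber b)
    (hcontr : ∀ σ σ', fiber σ = fiber σ' →
      ∑ a, ∑ b, q σ σ' a b * d a b ≤ (1 - c / n) * d σ σ')
    (lam L : ℝ) (f : Ω → ℝ)
    (heig : ∀ σ, ∑ a, P σ a * f a = lam * f σ)
    -- L = lip(f) > 0 : the Lipschitz constant of f over pairs in a common fiber.
    (hL : 0 < L)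
    (hLub : ∀ σ σ', σ ≠ σ' → fiber σ = fiber σ' → |f σ - f σ'| ≤ L * d σ σ')
    (hLmem : ∃ σ σ', σ ≠ σ' ∧ fiber σ = fiber σ' ∧ |f σ - f σ'| = L * d σ σ') :
    c / n ≤ 1 - lam := by
  obtain ⟨σ, σ', hne, hfib, hmax⟩ := hLmem
  have hcontract := abs_sub_le_of_coupling_contracts P d fiber q (1 - c / n) L f hL.le hd0
    hq0 hq1 hq2 hqfib hcontr hLub hfib
  rw [heig, heig, ← mul_sub, abs_mul, hmax] at hcontract
  have hlam : |lam| ≤ 1 - c / n := le_of_mul_le_mul_right hcontract (mul_pos hL (hdpos σ σ' hne))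
  linarith [le_abs_self lam]

/-- If an ergodic kernel P on a finite metric space admits, on each fiber of a
    P-preserved partition, a Markovian coupling contracting the distance by a
    factor (1 − c/n), then every eigenvalue λ whose eigenfunction is
    non-constant on some fiber (i.e. has positive Lipschitz constant over
    fibers) satisfies 1 − λ ≥ c/n. -/
theorem stmt18 {Ω I : Type*} [Fintype Ω]
    (P : Ω → Ω → ℝ) (d : Ω → Ω → ℝ) (fiber : Ω → I)
    (q : Ω → Ω → Ω → Ω → ℝ) (c n : ℝ) (hc : 0 < c) (hn : 0 < n)
    (hP0 : ∀ x y, 0 ≤ P x y) (hP1 : ∀ x, ∑ y, P x y = 1)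
    (hd0 : ∀ x, d x x = 0) (hdsymm : ∀ x y, d x y = d y x)
    (hdpos : ∀ x y, x ≠ y → 0 < d x y)
    (htri : ∀ x y z, d x z ≤ d x y + d y z)
    -- q σ σ' is a coupling of one step of the chain from σ and from σ',
    -- supported on pairs in a common fiber, contracting the distance.
    (hq0 : ∀ σ σ' a b, 0 ≤ q σ σ' a b)
    (hq1 : ∀ σ σ', fiber σ = fiber σ' → ∀ a, ∑ b, q σ σ' a b = P σ a)
    (hq2 : ∀ σ σ', fiber σ = fiber σ' → ∀ b, ∑ a, q σ σ' a b = P σ' b)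
    (hqfib : ∀ σ σ', fiber σ = fiber σ' → ∀ a b, q σ σ' a b ≠ 0 → fiber a = fiber b)
    (hcontr : ∀ σ σ', fiber σ = fiber σ' →
      ∑ a, ∑ b, q σ σ' a b * d a b ≤ (1 - c / n) * d σ σ')
    (lam L : ℝ) (f : Ω → ℝ)
    (heig : ∀ σ, ∑ a, P σ a * f a = lam * f σ)
    -- L = lip(f) > 0 : the Lipschitz constant of f over pairs in a common fiber.
    (hL : 0 < L)
    (hLub : ∀ σ σ', σ ≠ σ' → fiber σ = fiber σ' → |f σ - f σ'| ≤ L * d σ σ')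
    (hLmem : ∃ σ σ', σ ≠ σ' ∧ fiber σ = fiber σ' ∧ |f σ - f σ'| = L * d σ σ') :
    c / n ≤ 1 - lam :=
  stmt18_general P d fiber q c n hd0 hdpos hq0 hq1 hq2 hqfib hcontr lam L f heig hL hLub hLmem
end
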